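/- arXiv:2011.06208 — 2 statements merged into one kernel-verified Lean document; each statement's English description precedes it below -/
import Mathlib

section
/- For all r, R ∈ (0, H(X)): PF(r)/r ≤ I(X;Y)/H(X) ≤ IB(R)/R. -/
open Real BigOperators

namespace BN

variable {α β γ : Type*}

section Finite
variable [Fintype α] [Fintype β] [Fintype γ]

/-- `q` is a probability mass function on a finite alphabet. -/
def IsPMF (q : α → ℝ) : Prop := (∀ a, 0 ≤ q a) ∧ (∑ a, q a) = 1

/-- `p` is a joint probability mass function. -/
def IsJointPMF (p : α → β → ℝ) : Prop :=
  (∀ a b, 0 ≤ p a b) ∧ (∑ a, ∑ b, p a b) = 1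

/-- `k` is a channel (conditional distribution) from `α` to `γ`. -/
def IsChannel (k : α → γ → ℝ) : Prop :=
  (∀ a c, 0 ≤ k a c) ∧ ∀ a, (∑ c, k a c) = 1

/-- first marginal of a joint pmf -/
def fstM (p : α → β → ℝ) (a : α) : ℝ := ∑ b, p a b

/-- second marginal of a joint pmf -/
def sndM (p : α → β → ℝ) (b : β) : ℝ := ∑ a, p a b

/-- Shannon mutual information (in nats) of a joint pmf. -/
noncomputable def mi (p : α → β → ℝ) : ℝ :=
  ∑ a, ∑ b, p a b * Real.log (p a b / (fstM p a * sndM p b))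

/-- Shannon entropy (in nats). -/
noncomputable def ent (q : α → ℝ) : ℝ := -∑ a, q a * Real.log (q a)

/-- conditional entropy H(X|Y) of the first coordinate given the second. -/
noncomputable def condEnt (p : α → β → ℝ) : ℝ :=
  -∑ a, ∑ b, p a b * Real.log (p a b / sndM p b)

/-- Joint pmf of (X,T) when T is generated from X via channel `k`,
so Y ⊸ X ⊸ T is a Markov chain. -/
noncomputable def jXT (p : α → β → ℝ) (k : α → γ → ℝ) : α → γ → ℝ :=
  fun a c => fstM p a * k a c

/-- Joint pmf of (Y,T) under the Markov chain Y ⊸ X ⊸ T. -/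
noncomputable def jYT (p : α → β → ℝ) (k : α → γ → ℝ) : β → γ → ℝ :=
  fun b c => ∑ a, p a b * k a c

/-- I(X;T) under the Markov chain Y ⊸ X ⊸ T. -/
noncomputable def miXT (p : α → β → ℝ) (k : α → γ → ℝ) : ℝ := mi (jXT p k)

/-- I(Y;T) under the Markov chain Y ⊸ X ⊸ T. -/
noncomputable def miYT (p : α → β → ℝ) (k : α → γ → ℝ) : ℝ := mi (jYT p k)

/-- The information bottleneck function. -/
noncomputable def IB (p : α → β → ℝ) (R : ℝ) : ℝ :=
  sSup {v | ∃ (n : ℕ) (k : α → Fin n → ℝ),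
    IsChannel k ∧ miXT p k ≤ R ∧ v = miYT p k}

/-- The privacy funnel function. -/
noncomputable def PF (p : α → β → ℝ) (r : ℝ) : ℝ :=
  sInf {v | ∃ (n : ℕ) (k : α → Fin n → ℝ),
    IsChannel k ∧ r ≤ miXT p k ∧ v = miYT p k}

end Finite

end BN

/-!
Let `T` be `X` sent through an erasure channel that passes `X` on with probability `l` and
outputs an erasure symbol otherwise. For every `U` with `U ⊸ X ⊸ T`, the erasure symbol carries
no information and an unerased output equals `X`, so `I(U;T) = l · I(U;X)`. With `U = Y` and
`U = X` this gives `I(Y;T) = l · I(X;Y)` and `I(X;T) = l · H(X)`, so for `l = r / H(X)` the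
channel is admissible both in `PF(r)` and in `IB(r)`, whence `PF(r) ≤ r · I(X;Y) / H(X) ≤ IB(r)`.
The defining sets are bounded since `0 ≤ I(Y;T) ≤ H(Y)`.
-/

namespace BN

section MutualInformation

variable {α β : Type*}

lemma sub_le_mul_log_div {x y : ℝ} (hx : 0 ≤ x) (hy : 0 < y) : x - y ≤ x * log (x / y) := by
  have h := mul_le_mul_of_nonneg_left (self_sub_one_le_mul_log (div_nonneg hx hy.le)) hy.le
  field_simp at h
  linarith

lemma mul_log_div_self (x : ℝ) : x * log (x / x) = 0 := by
  rcases eq_or_ne x 0 with h | h <;> simp [h]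

lemma le_fstM [Fintype β] {q : α → β → ℝ} (hq : ∀ a b, 0 ≤ q a b) (a : α) (b : β) :
    q a b ≤ fstM q a :=
  Finset.single_le_sum (fun b _ => hq a b) (Finset.mem_univ b)

lemma le_sndM [Fintype α] {q : α → β → ℝ} (hq : ∀ a b, 0 ≤ q a b) (a : α) (b : β) :
    q a b ≤ sndM q b :=
  Finset.single_le_sum (fun a _ => hq a b) (Finset.mem_univ a)

lemma sum_sndM [Fintype α] [Fintype β] {q : α → β → ℝ} (hq : ∑ a, ∑ b, q a b = 1) :
    ∑ b, sndM q b = 1 := by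
  rw [← hq, Finset.sum_comm]
  rfl

lemma mi_nonneg [Fintype α] [Fintype β] {q : α → β → ℝ} (hq : IsJointPMF q) : 0 ≤ mi q := by
  have hterm : ∀ a b, q a b - fstM q a * sndM q b
      ≤ q a b * log (q a b / (fstM q a * sndM q b)) := by
    intro a b
    rcases (hq.1 a b).eq_or_lt with h | h
    · rw [← h, zero_mul, zero_sub, neg_nonpos]
      exact mul_nonneg (Finset.sum_nonneg fun b _ => hq.1 a b)
        (Finset.sum_nonneg fun a _ => hq.1 a b)
    · exact sub_le_mul_log_div h.le
        (mul_pos (h.trans_le (le_fstM hq.1 a b)) (h.trans_le (le_sndM hq.1 a b)))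
  have hsum : ∑ a, ∑ b, (q a b - fstM q a * sndM q b) = 0 := by
    simp only [Finset.sum_sub_distrib, ← Finset.mul_sum, ← Finset.sum_mul, sum_sndM hq.2]
    simp [fstM, hq.2]
  calc 0 = ∑ a, ∑ b, (q a b - fstM q a * sndM q b) := hsum.symm
    _ ≤ mi q := Finset.sum_le_sum fun a _ => Finset.sum_le_sum fun b _ => hterm a b

lemma mi_le_ent_fstM [Fintype α] [Fintype β] {q : α → β → ℝ} (hq : ∀ a b, 0 ≤ q a b) :
    mi q ≤ ent (fstM q) := by
  have hterm : ∀ a b, q a b * log (q a b / (fstM q a * sndM q b))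
      ≤ q a b * -log (fstM q a) := by
    intro a b
    rcases (hq a b).eq_or_lt with h | h
    · simp [← h]
    have hfa : 0 < fstM q a := h.trans_le (le_fstM hq a b)
    have hsb : 0 < sndM q b := h.trans_le (le_sndM hq a b)
    have hratio : q a b / (fstM q a * sndM q b) ≤ (fstM q a)⁻¹ := by
      rw [div_le_iff₀ (by positivity), inv_mul_cancel_left₀ hfa.ne']
      exact le_sndM hq a b
    rw [← log_inv]
    exact mul_le_mul_of_nonneg_left (log_le_log (by positivity) hratio) h.le
  calc mi q ≤ ∑ a, ∑ b, q a b * -log (fstM q a) :=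
        Finset.sum_le_sum fun a _ => Finset.sum_le_sum fun b _ => hterm a b
    _ = ent (fstM q) := by
        rw [ent, ← Finset.sum_neg_distrib]
        refine Finset.sum_congr rfl fun a _ => ?_
        rw [← Finset.sum_mul, mul_neg]
        rfl

lemma mi_comp_equiv {γ γ' : Type*} [Fintype α] [Fintype γ] [Fintype γ'] (q : α → γ → ℝ)
    (e : γ' ≃ γ) :
    mi (fun a c => q a (e c)) = mi q := by
  have hfst : fstM (fun a c => q a (e c)) = fstM q := funext fun a => Equiv.sum_comp e (q a)
  rw [mi, mi, hfst]
  exact Finset.sum_congr rfl fun a _ =>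
    Equiv.sum_comp e fun c => q a c * log (q a c / (fstM q a * sndM q c))

end MutualInformation

section Channel

variable {α β γ : Type*}

lemma IsChannel.comp_equiv {γ' : Type*} [Fintype γ] [Fintype γ'] {k : α → γ → ℝ}
    (hk : IsChannel k) (e : γ' ≃ γ) : IsChannel fun a c => k a (e c) :=
  ⟨fun a c => hk.1 a (e c), fun a => (Equiv.sum_comp e (k a)).trans (hk.2 a)⟩

lemma fstM_jYT [Fintype α] [Fintype γ] {p : α → β → ℝ} {k : α → γ → ℝ}
    (hk : ∀ a, ∑ c, k a c = 1) : fstM (jYT p k) = sndM p := by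
  funext b
  simp only [fstM, jYT]
  rw [Finset.sum_comm]
  simp only [← Finset.mul_sum, hk, mul_one]
  rfl

lemma jYT_isJointPMF [Fintype α] [Fintype β] [Fintype γ] {p : α → β → ℝ} (hp : IsJointPMF p)
    {k : α → γ → ℝ} (hk : IsChannel k) : IsJointPMF (jYT p k) := by
  refine ⟨fun b c => Finset.sum_nonneg fun a _ => mul_nonneg (hp.1 a b) (hk.1 a c), ?_⟩
  calc ∑ b, ∑ c, jYT p k b c = ∑ b, sndM p b :=
        Finset.sum_congr rfl fun b _ => congrFun (fstM_jYT hk.2) b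
    _ = 1 := sum_sndM hp.2

lemma le_IB_of_isChannel [Fintype α] [Fintype β] [Fintype γ] {p : α → β → ℝ}
    (hp : IsJointPMF p) {k : α → γ → ℝ} (hk : IsChannel k) {R : ℝ} (hkR : miXT p k ≤ R) :
    miYT p k ≤ IB p R := by
  have hbdd : BddAbove {v | ∃ (n : ℕ) (k : α → Fin n → ℝ),
      IsChannel k ∧ miXT p k ≤ R ∧ v = miYT p k} := by
    refine ⟨ent (sndM p), ?_⟩
    rintro _ ⟨n, k, hk, -, rfl⟩
    simpa only [miYT, fstM_jYT hk.2] using mi_le_ent_fstM (jYT_isJointPMF hp hk).1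
  let e := (Fintype.equivFin γ).symm
  exact le_csSup hbdd ⟨_, _, hk.comp_equiv e, (mi_comp_equiv (jXT p k) e).trans_le hkR,
    (mi_comp_equiv (jYT p k) e).symm⟩

lemma PF_le_of_isChannel [Fintype α] [Fintype β] [Fintype γ] {p : α → β → ℝ}
    (hp : IsJointPMF p) {k : α → γ → ℝ} (hk : IsChannel k) {r : ℝ} (hkr : r ≤ miXT p k) :
    PF p r ≤ miYT p k := by
  have hbdd : BddBelow {v | ∃ (n : ℕ) (k : α → Fin n → ℝ),
      IsChannel k ∧ r ≤ miXT p k ∧ v = miYT p k} := by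
    refine ⟨0, ?_⟩
    rintro _ ⟨n, k, hk, -, rfl⟩
    exact mi_nonneg (jYT_isJointPMF hp hk)
  let e := (Fintype.equivFin γ).symm
  exact csInf_le hbdd ⟨_, _, hk.comp_equiv e, hkr.trans_eq (mi_comp_equiv (jXT p k) e).symm,
    (mi_comp_equiv (jYT p k) e).symm⟩

end Channel

section Erasure

variable {α β : Type*} [DecidableEq α]

def diagJoint (f : α → ℝ) : α → α → ℝ := fun a a' => if a = a' then f a else 0

lemma mi_diagJoint [Fintype α] (f : α → ℝ) : mi (diagJoint f) = ent f := by
  have hfst : fstM (diagJoint f) = f := funext fun a => by simp [fstM, diagJoint]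
  have hsnd : sndM (diagJoint f) = f := funext fun a => by simp [sndM, diagJoint]
  rw [mi, hfst, hsnd, ent, ← Finset.sum_neg_distrib]
  refine Finset.sum_congr rfl fun a _ => ?_
  rcases eq_or_ne (f a) 0 with h | h
  · simp [diagJoint, h]
  · simp [diagJoint, div_mul_cancel_left₀ h, log_inv]

/-- `jYT q k` is the joint pmf of `(U, T)` for any joint pmf `q` of `(X, U)`; `diagJoint` is
the case `U = X`. -/
lemma jXT_eq_jYT_diagJoint [Fintype α] [Fintype β] {γ : Type*} (p : α → β → ℝ)
    (k : α → γ → ℝ) :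
    jXT p k = jYT (diagJoint (fstM p)) k := by
  funext a c
  simp [jXT, jYT, diagJoint]

/-- The erasure channel: the input is passed on with probability `l`, and replaced by the
erasure symbol `none` otherwise. -/
def erasure (l : ℝ) (a : α) : Option α → ℝ
  | none => 1 - l
  | some a' => if a = a' then l else 0

lemma sum_erasure [Fintype α] (l : ℝ) (a : α) : ∑ c, erasure l a c = 1 := by
  simp [Fintype.sum_option, erasure]

lemma isChannel_erasure [Fintype α] {l : ℝ} (hl0 : 0 ≤ l) (hl1 : l ≤ 1) :
    IsChannel (erasure (α := α) l) := by
  refine ⟨fun a c => ?_, sum_erasure l⟩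
  cases c with
  | none => exact sub_nonneg.2 hl1
  | some a' => by_cases h : a = a' <;> simp [erasure, h, hl0]

lemma mi_jYT_erasure [Fintype α] [Fintype β] {q : α → β → ℝ} (hq : ∑ a, ∑ b, q a b = 1)
    (l : ℝ) : mi (jYT q (erasure l)) = l * mi q := by
  have hnone : ∀ b, jYT q (erasure l) b none = sndM q b * (1 - l) := fun b => by
    simp [jYT, erasure, sndM, Finset.sum_mul]
  have hsome : ∀ b a, jYT q (erasure l) b (some a) = q a b * l := fun b a => by
    simp [jYT, erasure]
  have hsnd_none : sndM (jYT q (erasure l)) none = 1 - l := by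
    rw [sndM, Finset.sum_congr rfl fun b _ => hnone b, ← Finset.sum_mul, sum_sndM hq, one_mul]
  have hsnd_some : ∀ a, sndM (jYT q (erasure l)) (some a) = fstM q a * l := fun a => by
    rw [sndM, Finset.sum_congr rfl fun b _ => hsome b a, ← Finset.sum_mul]
    rfl
  have hterm : ∀ b a, q a b * l * log (q a b * l / (sndM q b * (fstM q a * l)))
      = l * (q a b * log (q a b / (fstM q a * sndM q b))) := fun b a => by
    rcases eq_or_ne l 0 with rfl | hl
    · simp
    rw [show sndM q b * (fstM q a * l) = fstM q a * sndM q b * l by ring,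
      mul_div_mul_right _ _ hl]
    ring
  rw [mi, fstM_jYT (sum_erasure l)]
  simp only [Fintype.sum_option, hnone, hsome, hsnd_none, hsnd_some, mul_log_div_self, zero_add,
    hterm]
  rw [Finset.sum_comm, mi, Finset.mul_sum]
  simp only [Finset.mul_sum]

end Erasure

section Bounds

variable {α β : Type*} [Fintype α] [Fintype β] {p : α → β → ℝ}

lemma miXT_erasure_div_ent [DecidableEq α] (hp : ∑ a, ∑ b, p a b = 1) {r : ℝ} (hr0 : 0 ≤ r)
    (hrH : r ≤ ent (fstM p)) : miXT p (erasure (r / ent (fstM p))) = r := by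
  have hdiag : ∑ a, ∑ a', diagJoint (fstM p) a a' = 1 := by simpa [diagJoint, fstM] using hp
  rw [miXT, jXT_eq_jYT_diagJoint, mi_jYT_erasure hdiag, mi_diagJoint]
  exact div_mul_cancel_of_imp fun h => le_antisymm (h ▸ hrH) hr0

lemma PF_le_div_mul_mi (hp : IsJointPMF p) {r : ℝ} (hr0 : 0 ≤ r) (hrH : r ≤ ent (fstM p)) :
    PF p r ≤ r / ent (fstM p) * mi p := by
  classical
  have hk := isChannel_erasure (α := α) (div_nonneg hr0 (hr0.trans hrH))
    (div_le_one_of_le₀ hrH (hr0.trans hrH))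
  rw [← mi_jYT_erasure hp.2]
  exact PF_le_of_isChannel hp hk (miXT_erasure_div_ent hp.2 hr0 hrH).ge

lemma div_mul_mi_le_IB (hp : IsJointPMF p) {R : ℝ} (hR0 : 0 ≤ R) (hRH : R ≤ ent (fstM p)) :
    R / ent (fstM p) * mi p ≤ IB p R := by
  classical
  have hk := isChannel_erasure (α := α) (div_nonneg hR0 (hR0.trans hRH))
    (div_le_one_of_le₀ hRH (hR0.trans hRH))
  rw [← mi_jYT_erasure hp.2]
  exact le_IB_of_isChannel hp hk (miXT_erasure_div_ent hp.2 hR0 hRH).le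

end Bounds

/-- for `r, R ∈ (0, H(X))`, `PF(r)/r ≤ I(X;Y)/H(X) ≤ IB(R)/R`. -/
theorem PF_IB_linear_bounds {α β : Type*} [Fintype α] [Fintype β]
    (p : α → β → ℝ) (hp : IsJointPMF p)
    (r R : ℝ) (hr : r ∈ Set.Ioo 0 (ent (fstM p))) (hR : R ∈ Set.Ioo 0 (ent (fstM p))) :
    PF p r / r ≤ mi p / ent (fstM p) ∧ mi p / ent (fstM p) ≤ IB p R / R := by
  obtain ⟨hr0, hrH⟩ := hr
  obtain ⟨hR0, hRH⟩ := hR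
  constructor
  · rw [div_le_iff₀ hr0]
    calc PF p r ≤ r / ent (fstM p) * mi p := PF_le_div_mul_mi hp hr0.le hrH.le
      _ = mi p / ent (fstM p) * r := by ring
  · rw [le_div_iff₀ hR0]
    calc mi p / ent (fstM p) * R = R / ent (fstM p) * mi p := by ring
      _ ≤ IB p R := div_mul_mi_le_IB hp hR0.le hRH.le

end BN
end

section
/- With the opposite sorting P_X(1)D_KL(P_{Y|X=1}‖P_Y) ≤ … ≤ P_X(m)D_KL(P_{Y|X=m}‖P_Y) and Z = min(X, M), one has I(Y;Z) ≤ ((M−1)/|𝒳|) I(X;Y) + Pr(X ≥ M) log(1/Pr(X ≥ M)). -/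
open Real BigOperators

namespace BN

noncomputable def contrib {m : ℕ} {β : Type*} [Fintype β]
    (p : Fin m → β → ℝ) (x : Fin m) : ℝ :=
  ∑ y, p x y * Real.log (p x y / (fstM p x * sndM p y))

def quant (m M : ℕ) (hm : 0 < m) : Fin m → Fin m :=
  fun x => ⟨min x.1 (M - 1), lt_of_le_of_lt (min_le_left _ _) x.2⟩

noncomputable def jZY {m : ℕ} {β : Type*} [Fintype β]
    (p : Fin m → β → ℝ) (f : Fin m → Fin m) : Fin m → β → ℝ :=
  fun z y => ∑ x, if f x = z then p x y else 0

/-! Clamping `X` at `c = M - 1` (values are `0`-based, so `x ≥ c` means `X ≥ M`) keeps the rows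
`x < c` of the joint pmf and merges all rows `x ≥ c` into the single row `c`. The merged row has
mass `w = Pr(X ≥ M)` and is dominated by `P_Y`, so its contribution to `I(Y;Z)` is at most
`w log (1/w)`. The kept rows carry the `M - 1` smallest of the sorted contributions to `I(X;Y)`,
so by Chebyshev's sum inequality their total is at most `(M - 1)/m · I(X;Y)`. -/

open Finset

theorem _root_.Monotone.card_mul_sum_filter_lt_le {ι : Type*} [Fintype ι] [LinearOrder ι]
    {c : ι → ℝ} (hc : Monotone c) (i : ι) :
    Fintype.card ι * ∑ z with z < i, c z ≤ #{z | z < i} * ∑ z, c z := by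
  have hind : Antitone fun z => if z < i then (1 : ℝ) else 0 := by
    intro a b hab
    by_cases hb : b < i
    · simp [hb, hab.trans_lt hb]
    · by_cases ha : a < i <;> simp [ha, hb]
  simpa [sum_filter, sum_boole, mul_comm] using (hc.antivary hind).card_mul_sum_le_sum_mul_sum

theorem sum_mul_log_div_le {β : Type*} [Fintype β] {a b : β → ℝ} (ha : ∀ y, 0 ≤ a y)
    (hab : ∀ y, a y ≤ b y) :
    ∑ y, a y * log (a y / ((∑ y, a y) * b y)) ≤ (∑ y, a y) * log (1 / ∑ y, a y) := by
  rw [sum_mul]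
  refine sum_le_sum fun y _ => ?_
  rcases (ha y).eq_or_lt with hy | hy
  · simp [← hy]
  have hsum : 0 < ∑ y, a y := hy.trans_le (single_le_sum (fun y _ => ha y) (mem_univ y))
  have hb : 0 < b y := hy.trans_le (hab y)
  refine mul_le_mul_of_nonneg_left (log_le_log (by positivity) ?_) hy.le
  rw [div_le_div_iff₀ (by positivity) hsum]
  nlinarith [hab y]

section Clamp

variable {m : ℕ} {β : Type*} [Fintype β] (p : Fin m → β → ℝ) (c : Fin m)

theorem sndM_jZY (f : Fin m → Fin m) : sndM (jZY p f) = sndM p := by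
  ext y
  simp only [sndM, jZY]
  rw [sum_comm]
  simp

theorem jZY_nonneg (hp : ∀ x y, 0 ≤ p x y) (f : Fin m → Fin m) (z : Fin m) (y : β) :
    0 ≤ jZY p f z y :=
  sum_nonneg fun x _ => by split_ifs <;> simp [hp x y]

theorem jZY_min_of_lt {z : Fin m} (hz : z < c) : jZY p (min · c) z = p z := by
  ext y
  refine (sum_eq_single z (fun x _ hx => if_neg ?_) (by simp)).trans (if_pos (min_eq_left hz.le))
  intro (hxz : min x c = z)
  rcases min_choice x c with h | h <;> rw [h] at hxz
  exacts [hx hxz, hz.ne' hxz]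

theorem jZY_min_self (y : β) : jZY p (min · c) c y = ∑ x, if c ≤ x then p x y else 0 := by
  simp only [jZY, min_eq_right_iff]

theorem jZY_min_of_gt {z : Fin m} (hz : c < z) : jZY p (min · c) z = 0 := by
  ext y
  exact sum_eq_zero fun x _ => if_neg ((min_le_right x c).trans_lt hz).ne

theorem contrib_jZY_min_of_lt {z : Fin m} (hz : z < c) :
    contrib (jZY p (min · c)) z = contrib p z := by
  have hrow := jZY_min_of_lt p c hz
  simp only [contrib, fstM, hrow, sndM_jZY]

theorem contrib_jZY_min_of_gt {z : Fin m} (hz : c < z) : contrib (jZY p (min · c)) z = 0 := by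
  simp [contrib, jZY_min_of_gt p c hz]

theorem fstM_jZY_min_self : fstM (jZY p (min · c)) c = ∑ x, if c ≤ x then fstM p x else 0 := by
  simp only [fstM, jZY_min_self]
  rw [sum_comm]
  simp [sum_ite_irrel]

theorem contrib_jZY_min_self_le (hp : ∀ x y, 0 ≤ p x y) :
    contrib (jZY p (min · c)) c ≤
      (∑ x, if c ≤ x then fstM p x else 0) * log (1 / ∑ x, if c ≤ x then fstM p x else 0) := by
  have hdom : ∀ y, jZY p (min · c) c y ≤ sndM p y := fun y => by
    rw [jZY_min_self]
    exact sum_le_sum fun x _ => by split_ifs <;> simp [hp x y]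
  rw [← fstM_jZY_min_self]
  unfold contrib
  rw [sndM_jZY]
  exact sum_mul_log_div_le (jZY_nonneg p hp _ c) hdom

theorem mi_jZY_min_le (hp : ∀ x y, 0 ≤ p x y) :
    mi (jZY p (min · c)) ≤ ∑ z with z < c, contrib p z +
      (∑ x, if c ≤ x then fstM p x else 0) * log (1 / ∑ x, if c ≤ x then fstM p x else 0) := by
  change ∑ z, contrib (jZY p (min · c)) z ≤ _
  rw [← sum_filter_add_sum_filter_not univ (· < c),
    sum_congr rfl fun z hz => contrib_jZY_min_of_lt p c (mem_filter.1 hz).2,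
    sum_eq_single_of_mem c (by simp) fun z hz hzc =>
      contrib_jZY_min_of_gt p c (lt_of_le_of_ne (not_lt.1 (mem_filter.1 hz).2) (Ne.symm hzc))]
  gcongr
  exact contrib_jZY_min_self_le p c hp

end Clamp

theorem quantization_upper_bound_general {β : Type*} [Fintype β]
    (m M : ℕ) (hm : 0 < m) (hM : 1 ≤ M) (hMm : M ≤ m)
    (p : Fin m → β → ℝ) (hp : IsJointPMF p)
    (hsort : ∀ i j : Fin m, i ≤ j → contrib p i ≤ contrib p j) :
    mi (jZY p (quant m M hm)) ≤
      ((M : ℝ) - 1) / m * mi p +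
        (∑ x : Fin m, if M - 1 ≤ x.1 then fstM p x else 0) *
          Real.log (1 / (∑ x : Fin m, if M - 1 ≤ x.1 then fstM p x else 0)) := by
  set c : Fin m := ⟨M - 1, by omega⟩
  have hquant : quant m M hm = (min · c) := rfl
  have hcard : (#{z | z < c} : ℝ) = M - 1 := by
    rw [filter_gt_eq_Iio, Fin.card_Iio, Nat.cast_sub hM, Nat.cast_one]
  have havg := (show Monotone (contrib p) from hsort).card_mul_sum_filter_lt_le c
  rw [Fintype.card_fin, hcard] at havg
  rw [hquant]
  refine (mi_jZY_min_le p c hp.1).trans (add_le_add_left ?_ _)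
  rw [div_mul_eq_mul_div, le_div_iff₀ (by exact_mod_cast hm), mul_comm]
  exact havg

/-- with the opposite sorting
`P_X(1)D(P_{Y|X=1}‖P_Y) ≤ ⋯ ≤ P_X(m)D(P_{Y|X=m}‖P_Y)` and `Z = min(X, M)`,
`I(Y;Z) ≤ ((M−1)/|𝒳|)·I(X;Y) + Pr(X ≥ M)·log(1/Pr(X ≥ M))`. -/
theorem quantization_upper_bound {β : Type*} [Fintype β]
    (m M : ℕ) (hm : 0 < m) (hM : 1 ≤ M) (hMm : M ≤ m)
    (p : Fin m → β → ℝ) (hp : IsJointPMF p)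
    (hsort : ∀ i j : Fin m, i ≤ j → contrib p i ≤ contrib p j)
    (hpos : 0 < ∑ x : Fin m, if M - 1 ≤ x.1 then fstM p x else 0) :
    mi (jZY p (quant m M hm)) ≤
      ((M : ℝ) - 1) / m * mi p +
        (∑ x : Fin m, if M - 1 ≤ x.1 then fstM p x else 0) *
          Real.log (1 / (∑ x : Fin m, if M - 1 ≤ x.1 then fstM p x else 0)) :=
  quantization_upper_bound_general m M hm hM hMm p hp hsort

end BN
end
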